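/- arXiv:1801.03354 — 3 statements merged into one kernel-verified Lean document; each statement's English description precedes it below -/
import Mathlib

section
/- Let F be a finite type. Let d_0, d_1, ..., d_n : F → ℕ∞ (where ℕ∞ = WithTop ℕ) be a pointwise antitone sequence of tables (d_{i+1} f ≤ d_i f for all i < n and f ∈ F), and let f_0, f_1, ..., f_{n-1} ∈ F be features such that for every i < n: (i : ℕ∞) ≤ d_i f_i and d_{i+1} f_i ≤ i. Then the assignment i ↦ f_i is injective, and consequently n ≤ card F. -/
/-- Bound on the length of a single rollout in Rollout IW(1): along a rollout
with node at depth `i` justified by a feature `f i` with `i ≤ d[f i]` before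
the step and `d[f i] ≤ i` after it, the map `i ↦ f i` is injective and the
rollout length is at most `card F`. -/
theorem rollout_length_bound (F : Type*) [Fintype F] (n : ℕ)
    (d : Fin (n + 1) → F → ℕ∞) (f : Fin n → F)
    (hanti : ∀ i : Fin n, ∀ g : F, d i.succ g ≤ d i.castSucc g)
    (hstep : ∀ i : Fin n,
      ((i : ℕ) : ℕ∞) ≤ d i.castSucc (f i) ∧ d i.succ (f i) ≤ ((i : ℕ) : ℕ∞)) :
    Function.Injective f ∧ n ≤ Fintype.card F := by
  have mono : ∀ g : F, ∀ b a : Fin (n + 1), a ≤ b → d b g ≤ d a g := by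
    intro g b
    induction b using Fin.induction with
    | zero => intro a ha; simp [Fin.le_zero_iff.mp ha]
    | succ i ih =>
      intro a ha
      rcases eq_or_lt_of_le ha with h | h
      · simp [h]
      · exact le_trans (hanti i g) (ih a (Fin.le_castSucc_iff.mpr h))
  have hinj : Function.Injective f := by
    have key : ∀ i j : Fin n, i < j → f i ≠ f j := by
      intro i j hij hf
      have h1 : ((j : ℕ) : ℕ∞) ≤ d j.castSucc (f j) := (hstep j).1
      have h2 : d j.castSucc (f j) ≤ d i.succ (f j) := by
        apply mono
        have : (i : ℕ) + 1 ≤ (j : ℕ) := hij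
        simpa [Fin.le_def] using this
      have h3 : d i.succ (f j) ≤ ((i : ℕ) : ℕ∞) := hf ▸ (hstep i).2
      have : ((j : ℕ) : ℕ∞) ≤ ((i : ℕ) : ℕ∞) := le_trans h1 (le_trans h2 h3)
      have : (j : ℕ) ≤ (i : ℕ) := by exact_mod_cast this
      omega
    intro i j hf
    by_contra hne
    rcases lt_or_gt_of_ne hne with h | h
    · exact key i j h hf
    · exact key j i h hf.symm
  refine ⟨hinj, ?_⟩
  simpa using Fintype.card_le_of_injective f hinj
end

section
/- Let F be a finite type. Let d_0, d_1, ..., d_m : F → ℕ∞ (where ℕ∞ = WithTop ℕ) be a pointwise antitone sequence of tables, and let (g_0, δ_0), ..., (g_{m-1}, δ_{m-1}) be pairs with g_i ∈ F and δ_i ∈ ℕ, δ_i ≤ card F, such that for every i < m: (δ_i : ℕ∞) < d_i g_i and d_{i+1} g_i ≤ δ_i. Then for all i < j < m with g_i = g_j one has δ_j < δ_i; consequently the assignment i ↦ (g_i, δ_i) is injective and m ≤ (card F) · (card F + 1). -/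
/-- Bound on the number of nodes in the lookahead tree of Rollout IW(1): each
new node at depth `δ i ≤ card F` makes an extended feature `(g i, δ i)` true
with `δ i < d[g i]` before the step and `d[g i] ≤ δ i` after it; then repeated
features come with strictly decreasing depths, `i ↦ (g i, δ i)` is injective,
and `m ≤ card F * (card F + 1)`. -/
theorem rollout_tree_size_bound (F : Type*) [Fintype F] (m : ℕ)
    (d : Fin (m + 1) → F → ℕ∞) (g : Fin m → F) (δ : Fin m → ℕ)
    (hδ : ∀ i, δ i ≤ Fintype.card F)
    (hanti : ∀ i : Fin m, ∀ f : F, d i.succ f ≤ d i.castSucc f)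
    (hstep : ∀ i : Fin m,
      ((δ i : ℕ) : ℕ∞) < d i.castSucc (g i) ∧ d i.succ (g i) ≤ ((δ i : ℕ) : ℕ∞)) :
    (∀ i j : Fin m, i < j → g i = g j → δ j < δ i) ∧
      Function.Injective (fun i => (g i, δ i)) ∧
      m ≤ Fintype.card F * (Fintype.card F + 1) := by
  have mono : ∀ f : F, ∀ a b : Fin (m + 1), a ≤ b → d b f ≤ d a f := by
    intro f a b
    induction b using Fin.induction with
    | zero => intro hab; rw [Fin.le_zero_iff.mp hab]
    | succ i ih =>
        intro hab
        rcases lt_or_eq_of_le hab with h | h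
        · have h' : a ≤ i.castSucc := Fin.le_castSucc_iff.mpr h
          exact le_trans (hanti i f) (ih h')
        · rw [h]
  have dec : ∀ i j : Fin m, i < j → g i = g j → δ j < δ i := by
    intro i j hij hg
    have h1 : ((δ j : ℕ) : ℕ∞) < d j.castSucc (g j) := (hstep j).1
    have hle : i.succ ≤ j.castSucc := by
      simp only [Fin.le_def, Fin.val_succ, Fin.coe_castSucc]
      exact hij
    have h2 : d j.castSucc (g j) ≤ d i.succ (g i) := by
      rw [← hg]; exact mono (g i) _ _ hle
    have h3 : d i.succ (g i) ≤ ((δ i : ℕ) : ℕ∞) := (hstep i).2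
    have : ((δ j : ℕ) : ℕ∞) < ((δ i : ℕ) : ℕ∞) := lt_of_lt_of_le h1 (le_trans h2 h3)
    exact_mod_cast this
  have inj : Function.Injective (fun i => (g i, δ i)) := by
    intro i j h
    simp only [Prod.mk.injEq] at h
    rcases lt_trichotomy i j with hlt | heq | hgt
    · exact absurd h.2 (ne_of_gt (dec i j hlt h.1))
    · exact heq
    · exact absurd h.2 (ne_of_lt (dec j i hgt h.1.symm))
  refine ⟨dec, inj, ?_⟩
  have inj' : Function.Injective
      (fun i : Fin m => ((g i, ⟨δ i, Nat.lt_succ_of_le (hδ i)⟩) :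
        F × Fin (Fintype.card F + 1))) := by
    intro i j h
    simp only [Prod.mk.injEq, Fin.mk.injEq] at h
    exact inj (Prod.ext h.1 h.2)
  have := Fintype.card_le_of_injective _ inj'
  simpa using this
end

section
/- Let F and A be finite types and let N = card F. Consider a sequence of m steps with state (d_i, S_i) for i = 0, ..., m, where the d_i : F → ℕ∞ (ℕ∞ = WithTop ℕ) form a pointwise antitone sequence of tables whose finite values are bounded by N (for all i, f: d_i f ≠ ∞ → d_i f ≤ N), the S_i are finite subsets of A with S_i ⊆ S_{i+1}, and for every i < m at least one of the following holds: d_{i+1} ≠ d_i, or S_i ⊊ S_{i+1}. Then m ≤ N · (N + 1) + card A. -/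
/-- Counting argument behind termination of Rollout IW(1) (Theorem 2): each of
`m` steps either strictly improves the antitone distance table `d : F → ℕ∞`
(whose finite values are bounded by `N = card F`), or strictly enlarges a
monotone finite set `S` of labeled elements of `A`; hence
`m ≤ N * (N + 1) + card A`. -/
theorem rollout_iw1_termination_bound (F A : Type*) [Fintype F] [Fintype A]
    [DecidableEq A] (m : ℕ)
    (d : Fin (m + 1) → F → ℕ∞) (S : Fin (m + 1) → Finset A)
    (hanti : ∀ i : Fin m, ∀ f : F, d i.succ f ≤ d i.castSucc f)
    (hbound : ∀ i : Fin (m + 1), ∀ f : F, d i f ≠ ⊤ → d i f ≤ (Fintype.card F : ℕ∞))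
    (hmono : ∀ i : Fin m, S i.castSucc ⊆ S i.succ)
    (hstep : ∀ i : Fin m, d i.succ ≠ d i.castSucc ∨ S i.castSucc ⊂ S i.succ) :
    m ≤ Fintype.card F * (Fintype.card F + 1) + Fintype.card A := by
  classical
  set N := Fintype.card F with hN
  set φ : ℕ∞ → ℕ := fun x => (min x ((N : ℕ∞) + 1)).toNat with hφ
  set μ : Fin (m + 1) → ℕ :=
    fun i => (∑ f, φ (d i f)) + (Fintype.card A - (S i).card) with hμ
  have hTop : ((N : ℕ∞) + 1) ≠ ⊤ := by exact_mod_cast ENat.coe_ne_top (N + 1)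
  have hmin_ne : ∀ x : ℕ∞, min x ((N : ℕ∞) + 1) ≠ ⊤ := by
    intro x
    exact ne_top_of_le_ne_top hTop (min_le_right _ _)
  have htoNat_lt : ∀ {a b : ℕ∞}, b ≠ ⊤ → a < b → a.toNat < b.toNat := by
    intro a b hb hab
    have ha : a ≠ ⊤ := ne_top_of_lt hab
    rw [← ENat.coe_toNat ha, ← ENat.coe_toNat hb] at hab
    exact_mod_cast hab
  have hφ_le : ∀ x, φ x ≤ N + 1 := by
    intro x
    have h := ENat.toNat_le_toNat (min_le_right x ((N : ℕ∞) + 1)) hTop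
    have h2 : ((N : ℕ∞) + 1).toNat = N + 1 := by
      rw [← Nat.cast_add_one, ENat.toNat_coe]
    rwa [h2] at h
  have hφ_mono : ∀ {x y : ℕ∞}, x ≤ y → φ x ≤ φ y := by
    intro x y h
    exact ENat.toNat_le_toNat (min_le_min h le_rfl) (hmin_ne y)
  have hφ_strict : ∀ (i : Fin m) (f : F), d i.succ f < d i.castSucc f →
      φ (d i.succ f) < φ (d i.castSucc f) := by
    intro i f h
    have hne : d i.succ f ≠ ⊤ := h.ne_top
    have hle : d i.succ f ≤ (N : ℕ∞) := hbound _ f hne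
    have hlt1 : d i.succ f < (N : ℕ∞) + 1 :=
      lt_of_le_of_lt hle (by exact_mod_cast lt_add_one N)
    have h1 : min (d i.succ f) ((N : ℕ∞) + 1) = d i.succ f := min_eq_left hlt1.le
    have h2 : min (d i.succ f) ((N : ℕ∞) + 1) < min (d i.castSucc f) ((N : ℕ∞) + 1) := by
      rw [h1]
      exact lt_min h hlt1
    exact htoNat_lt (hmin_ne _) h2
  have hdec : ∀ i : Fin m, μ i.succ < μ i.castSucc := by
    intro i
    rcases hstep i with h | h
    · obtain ⟨f, hf⟩ : ∃ f, d i.succ f < d i.castSucc f := by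
        by_contra hc
        push_neg at hc
        exact h (funext fun f => le_antisymm (hanti i f) (hc f))
      have hsum : ∑ f, φ (d i.succ f) < ∑ f, φ (d i.castSucc f) :=
        Finset.sum_lt_sum (fun g _ => hφ_mono (hanti i g))
          ⟨f, Finset.mem_univ f, hφ_strict i f hf⟩
      have hS : Fintype.card A - (S i.succ).card ≤ Fintype.card A - (S i.castSucc).card :=
        Nat.sub_le_sub_left (Finset.card_le_card (hmono i)) _
      simp only [hμ]
      omega
    · have hc : (S i.castSucc).card < (S i.succ).card := Finset.card_lt_card h
      have hcc : (S i.succ).card ≤ Fintype.card A := Finset.card_le_univ _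
      have hsum : ∑ f, φ (d i.succ f) ≤ ∑ f, φ (d i.castSucc f) :=
        Finset.sum_le_sum (fun g _ => hφ_mono (hanti i g))
      simp only [hμ]
      omega
  have key : ∀ k, (hk : k ≤ m) → μ ⟨k, Nat.lt_succ_of_le hk⟩ + k ≤ μ ⟨0, Nat.succ_pos m⟩ := by
    intro k
    induction k with
    | zero => intro _; simp
    | succ n ih =>
      intro hk
      have hn : n ≤ m := Nat.le_of_succ_le hk
      have hd := hdec ⟨n, hk⟩
      have h1 : (⟨n, hk⟩ : Fin m).succ = ⟨n + 1, Nat.lt_succ_of_le hk⟩ := rfl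
      have h2 : (⟨n, hk⟩ : Fin m).castSucc = ⟨n, Nat.lt_succ_of_le hn⟩ := rfl
      rw [h1, h2] at hd
      have := ih hn
      omega
  have h0 : μ ⟨0, Nat.succ_pos m⟩ ≤ N * (N + 1) + Fintype.card A := by
    have hsum : ∑ f : F, φ (d ⟨0, Nat.succ_pos m⟩ f) ≤ N * (N + 1) := by
      calc ∑ f : F, φ (d ⟨0, Nat.succ_pos m⟩ f) ≤ ∑ _f : F, (N + 1) :=
            Finset.sum_le_sum fun g _ => hφ_le _
        _ = N * (N + 1) := by simp [mul_comm, hN]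
    have : Fintype.card A - (S ⟨0, Nat.succ_pos m⟩).card ≤ Fintype.card A := Nat.sub_le _ _
    simp only [hμ]
    omega
  have := key m le_rfl
  omega
end
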